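/- (Decomposition, stable case) Let C be an sᵢ-stable set of transpositions. Then H_C decomposes as an internal direct sum H_C = H_C^{∗sᵢ} ⊕ (xᵢ − x_{i+1})·H_C^{∗sᵢ} of ℂ[t₁,…,tₙ]-submodules, where H_C^{∗sᵢ} = {f ∈ H_C : f ∗ sᵢ = f}. -/

import Mathlib

open MvPolynomial

/-- The ring `H = Fun(Sₙ, ℂ[t₁,…,tₙ])`, with pointwise operations. -/
abbrev Hr (n : ℕ) := Equiv.Perm (Fin n) → MvPolynomial (Fin n) ℂ

/-- The element `xᵢ ∈ H`, given by `v ↦ t_{v(i)}`. -/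
noncomputable def xH {n : ℕ} (i : Fin n) : Hr n := fun v => X (v i)

/-- The element `tᵢ ∈ H`, the constant function `v ↦ tᵢ`. -/
noncomputable def tH {n : ℕ} (i : Fin n) : Hr n := fun _ => X i

/-- The right star action on `H`: `(g ∗ w)(v) = g(v w⁻¹)`. -/
noncomputable def starH {n : ℕ} (g : Hr n) (w : Equiv.Perm (Fin n)) : Hr n :=
  fun v => g (v * w⁻¹)

/-- The left dot action on `H`:
`(w · g)(v; t₁,…,tₙ) = g(w⁻¹ v; t_{w(1)},…,t_{w(n)})`. -/
noncomputable def dotH {n : ℕ} (w : Equiv.Perm (Fin n)) (g : Hr n) : Hr n :=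
  fun v => rename (⇑w) (g (w⁻¹ * v))


/-- `f` satisfies the divisibility condition `τ` for a transposition `τ = (j ↔ k)`:
`f − f∗τ` is a multiple of `xⱼ − xₖ` in `H` (i.e. pointwise, with quotients in
`ℂ[t₁,…,tₙ]`). -/
def condP {n : ℕ} (τ : Equiv.Perm (Fin n)) (f : Hr n) : Prop :=
  ∀ j k : Fin n, τ = Equiv.swap j k → (xH j - xH k) ∣ (f - starH f τ)

/-- The subring `H_C` of elements satisfying all conditions in a set `C` of
transpositions. -/
def HCset {n : ℕ} (C : Set (Equiv.Perm (Fin n))) : Set (Hr n) :=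
  {f | ∀ τ ∈ C, condP τ f}


/-!
Write `s = sᵢ` and `δ = xᵢ - xᵢ₊₁`. Condition `s` gives `f - f ∗ s = δ q`; as `δ ∗ s = -δ` and `δ`
is a non-zero-divisor, `q` is `s`-invariant, so `f = ½ (f + f ∗ s) + δ · ½ q` is a decomposition,
and applying `∗ s` to any decomposition `f = g + δ h` recovers `g` and `δ h`, hence `h`.
Stability of `C` puts `f ∗ s` in `H_C`, so `δ q ∈ H_C`. For `τ = (j ↔ k) ≠ s` in `C`, `δ` itself
satisfies condition `τ`, so `xⱼ - xₖ` divides `δ (q - q ∗ τ)`; pointwise, substituting `t_k` for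
`t_j` kills `xⱼ - xₖ` but not `δ`, so `xⱼ - xₖ` divides `q - q ∗ τ`.
-/

namespace MvPolynomial

variable {σ R : Type*} [CommRing R] [DecidableEq σ]

theorem X_sub_X_dvd_sub_rename_update (j k : σ) (p : MvPolynomial σ R) :
    X j - X k ∣ p - rename (Function.update id j k) p := by
  rw [← Ideal.mem_span_singleton, ← Ideal.Quotient.eq]
  suffices h : (Ideal.Quotient.mkₐ R _).comp (rename (Function.update id j k)) =
      Ideal.Quotient.mkₐ R (Ideal.span {(X j - X k : MvPolynomial σ R)}) from
    (DFunLike.congr_fun h p).symm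
  ext i
  by_cases hi : i = j
  · subst hi
    simp only [AlgHom.comp_apply, rename_X, Function.update_self, Ideal.Quotient.mkₐ_eq_mk,
      Ideal.Quotient.eq, Ideal.mem_span_singleton]
    rw [← neg_sub, neg_dvd]
  · simp [hi]

theorem X_sub_X_dvd_iff_rename_update_eq_zero (j k : σ) (p : MvPolynomial σ R) :
    X j - X k ∣ p ↔ rename (Function.update id j k) p = 0 := by
  constructor
  · rintro ⟨r, rfl⟩
    simp [Function.update_apply]
  · intro h
    simpa [h] using X_sub_X_dvd_sub_rename_update j k p

theorem X_sub_X_dvd_of_dvd_mul [IsDomain R] {a b j k : σ} (hab : a ≠ b)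
    (hne : Equiv.swap a b ≠ Equiv.swap j k) {p : MvPolynomial σ R}
    (h : X j - X k ∣ (X a - X b) * p) : X j - X k ∣ p := by
  rw [X_sub_X_dvd_iff_rename_update_eq_zero] at h ⊢
  refine (mul_eq_zero.1 (by simpa using h)).resolve_left ?_
  rw [sub_eq_zero, X_inj]
  intro hu
  apply hne
  by_cases ha : a = j <;> by_cases hb : b = j <;> simp_all [Equiv.swap_comm]

end MvPolynomial

section StarAction

variable {n : ℕ}

@[simp]
theorem starH_add (f g : Hr n) (w : Equiv.Perm (Fin n)) :
    starH (f + g) w = starH f w + starH g w := rfl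

@[simp]
theorem starH_sub (f g : Hr n) (w : Equiv.Perm (Fin n)) :
    starH (f - g) w = starH f w - starH g w := rfl

@[simp]
theorem starH_mul (f g : Hr n) (w : Equiv.Perm (Fin n)) :
    starH (f * g) w = starH f w * starH g w := rfl

@[simp]
theorem starH_smul (c : ℂ) (f : Hr n) (w : Equiv.Perm (Fin n)) :
    starH (c • f) w = c • starH f w := rfl

theorem starH_xH (e : Fin n) (w : Equiv.Perm (Fin n)) : starH (xH e) w = xH (w⁻¹ e) := rfl

theorem starH_starH (f : Hr n) (u w : Equiv.Perm (Fin n)) :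
    starH (starH f u) w = starH f (u * w) := by
  funext v
  simp [starH, mul_assoc]

@[simp]
theorem starH_starH_swap (f : Hr n) (a b : Fin n) :
    starH (starH f (Equiv.swap a b)) (Equiv.swap a b) = f := by
  funext v
  simp [starH]

theorem starH_swap_xH_sub_xH (a b : Fin n) :
    starH (xH a - xH b) (Equiv.swap a b) = -(xH a - xH b) := by
  simp [starH_xH]

theorem isLeftRegular_xH_sub_xH {a b : Fin n} (hab : a ≠ b) :
    IsLeftRegular (xH a - xH b : Hr n) :=
  Pi.isLeftRegular_iff.2 fun v _ _ h =>
    mul_left_cancel₀ (sub_ne_zero.2 <| (X_injective.comp v.injective).ne hab) h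

end StarAction

section Divisibility

variable {n : ℕ}

theorem xH_sub_xH_dvd_iff (j k : Fin n) (F : Hr n) :
    xH j - xH k ∣ F ↔ ∀ v : Equiv.Perm (Fin n), X (v j) - X (v k) ∣ F v := by
  constructor
  · rintro ⟨r, rfl⟩ v
    exact ⟨r v, rfl⟩
  · intro h
    choose r hr using h
    exact ⟨r, funext hr⟩

theorem xH_sub_xH_dvd_of_dvd_mul {a b j k : Fin n} (hab : a ≠ b)
    (hne : Equiv.swap a b ≠ Equiv.swap j k) {F : Hr n}
    (h : xH j - xH k ∣ (xH a - xH b) * F) : xH j - xH k ∣ F := by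
  rw [xH_sub_xH_dvd_iff] at h ⊢
  intro v
  refine X_sub_X_dvd_of_dvd_mul (v.injective.ne hab) ?_ (h v)
  rw [Equiv.swap_apply_apply, Equiv.swap_apply_apply]
  exact (MulAut.conj v).injective.ne hne

end Divisibility

namespace condP

variable {n : ℕ} {τ : Equiv.Perm (Fin n)} {f g : Hr n}

theorem add (hf : condP τ f) (hg : condP τ g) : condP τ (f + g) := fun j k hjk => by
  simpa only [starH_add, add_sub_add_comm] using dvd_add (hf j k hjk) (hg j k hjk)

theorem sub (hf : condP τ f) (hg : condP τ g) : condP τ (f - g) := fun j k hjk => by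
  simpa only [starH_sub, sub_sub_sub_comm] using dvd_sub (hf j k hjk) (hg j k hjk)

theorem smul (c : ℂ) (hf : condP τ f) : condP τ (c • f) := fun j k hjk => by
  simpa only [starH_smul, smul_sub] using dvd_smul_of_dvd c (hf j k hjk)

theorem starH_of_conj {w : Equiv.Perm (Fin n)} (hf : condP (w * τ * w⁻¹) f) :
    condP τ (starH f w) := by
  rintro j k rfl
  obtain ⟨r, hr⟩ := hf (w j) (w k) (Equiv.swap_apply_apply w j k).symm
  have hconj : starH f w - starH (starH f w) (Equiv.swap j k) =
      starH (f - starH f (w * Equiv.swap j k * w⁻¹)) w := by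
    simp [starH_starH, mul_assoc]
  rw [hconj, hr, starH_mul]
  simp [starH_xH]

end condP

theorem condP_xH {n : ℕ} (τ : Equiv.Perm (Fin n)) (e : Fin n) : condP τ (xH e) := by
  rintro j k rfl
  rw [starH_xH, Equiv.swap_inv]
  by_cases hj : e = j
  · simp [hj]
  by_cases hk : e = k
  · simp only [hk, Equiv.swap_apply_right]
    rw [← neg_sub, neg_dvd]
  · simp [Equiv.swap_apply_of_ne_of_ne hj hk]

namespace HCset

variable {n : ℕ} {C : Set (Equiv.Perm (Fin n))} {f g : Hr n}

theorem add_mem (hf : f ∈ HCset C) (hg : g ∈ HCset C) : f + g ∈ HCset C :=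
  fun τ hτ => (hf τ hτ).add (hg τ hτ)

theorem sub_mem (hf : f ∈ HCset C) (hg : g ∈ HCset C) : f - g ∈ HCset C :=
  fun τ hτ => (hf τ hτ).sub (hg τ hτ)

theorem smul_mem (c : ℂ) (hf : f ∈ HCset C) : c • f ∈ HCset C :=
  fun τ hτ => (hf τ hτ).smul c

theorem starH_mem {w : Equiv.Perm (Fin n)} (hC : ∀ τ ∈ C, w * τ * w⁻¹ ∈ C)
    (hf : f ∈ HCset C) : starH f w ∈ HCset C :=
  fun τ hτ => (hf _ (hC τ hτ)).starH_of_conj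

theorem of_xH_sub_xH_mul_mem {a b : Fin n} (hab : a ≠ b) {q : Hr n}
    (hq : starH q (Equiv.swap a b) = q) (hmem : (xH a - xH b) * q ∈ HCset C) :
    q ∈ HCset C := by
  intro τ hτ j k hjk
  by_cases hτs : τ = Equiv.swap a b
  · rw [hτs, hq, sub_self]
    exact dvd_zero _
  refine xH_sub_xH_dvd_of_dvd_mul hab (hjk ▸ Ne.symm hτs) ?_
  have hδ := ((condP_xH τ a).sub (condP_xH τ b)) j k hjk
  have hsplit : (xH a - xH b) * (q - starH q τ) =
      ((xH a - xH b) * q - starH ((xH a - xH b) * q) τ) -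
        (xH a - xH b - starH (xH a - xH b) τ) * starH q τ := by
    rw [starH_mul]
    ring
  rw [hsplit]
  exact dvd_sub (hmem τ hτ j k hjk) (dvd_mul_of_dvd_left hδ _)

end HCset

section Decomposition

variable {n : ℕ} {a b : Fin n}

theorem starH_swap_eq_of_sub_eq_xH_sub_xH_mul (hab : a ≠ b) {f q : Hr n}
    (hq : f - starH f (Equiv.swap a b) = (xH a - xH b) * q) :
    starH q (Equiv.swap a b) = q := by
  apply isLeftRegular_xH_sub_xH hab
  have hq' := congrArg (starH · (Equiv.swap a b)) hq
  rw [starH_sub, starH_mul, starH_starH_swap, starH_swap_xH_sub_xH] at hq'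
  linear_combination hq' + hq

theorem starH_swap_add_starH_swap (f : Hr n) :
    starH (f + starH f (Equiv.swap a b)) (Equiv.swap a b) = f + starH f (Equiv.swap a b) := by
  rw [starH_add, starH_starH_swap, add_comm]

theorem eq_smul_add_xH_sub_xH_mul_smul {f q : Hr n}
    (hq : f - starH f (Equiv.swap a b) = (xH a - xH b) * q) :
    f = (2⁻¹ : ℂ) • (f + starH f (Equiv.swap a b)) + (xH a - xH b) * ((2⁻¹ : ℂ) • q) := by
  rw [mul_smul_comm, ← hq]
  module

theorem eq_of_add_xH_sub_xH_mul_eq (hab : a ≠ b) {g h g' h' : Hr n}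
    (hg : starH g (Equiv.swap a b) = g) (hh : starH h (Equiv.swap a b) = h)
    (hg' : starH g' (Equiv.swap a b) = g') (hh' : starH h' (Equiv.swap a b) = h')
    (e : g + (xH a - xH b) * h = g' + (xH a - xH b) * h') : g = g' ∧ h = h' := by
  have e' := congrArg (starH · (Equiv.swap a b)) e
  rw [starH_add, starH_add, starH_mul, starH_mul, starH_swap_xH_sub_xH, hg, hh, hg', hh'] at e'
  have e'' : g - (xH a - xH b) * h = g' - (xH a - xH b) * h' := by linear_combination e'
  have hδ : (xH a - xH b) * h = (xH a - xH b) * h' := by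
    linear_combination (norm := module) (2⁻¹ : ℂ) • (e - e'')
  exact ⟨by linear_combination e - hδ, isLeftRegular_xH_sub_xH hab hδ⟩

end Decomposition

theorem stable_decomposition_general (n : ℕ) (a b : Fin n) (hab : (a : ℕ) + 1 = b)
    (C : Set (Equiv.Perm (Fin n)))
    (hs : Equiv.swap a b ∈ C)
    (hstab : ∀ τ, τ ∈ C ↔ Equiv.swap a b * τ * Equiv.swap a b ∈ C) :
    ∀ f ∈ HCset C, ∃! p : Hr n × Hr n,
      (p.1 ∈ HCset C ∧ starH p.1 (Equiv.swap a b) = p.1) ∧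
      (p.2 ∈ HCset C ∧ starH p.2 (Equiv.swap a b) = p.2) ∧
      f = p.1 + (xH a - xH b) * p.2 := by
  intro f hf
  have hne : a ≠ b := Fin.ne_of_val_ne (by omega)
  have hfs : starH f (Equiv.swap a b) ∈ HCset C :=
    HCset.starH_mem (fun τ hτ => by simpa using (hstab τ).1 hτ) hf
  obtain ⟨q, hq⟩ := hf _ hs a b rfl
  have hqs := starH_swap_eq_of_sub_eq_xH_sub_xH_mul hne hq
  have hqC : q ∈ HCset C := HCset.of_xH_sub_xH_mul_mem hne hqs (hq ▸ HCset.sub_mem hf hfs)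
  have hdecomp := eq_smul_add_xH_sub_xH_mul_smul hq
  have hgs : starH ((2⁻¹ : ℂ) • (f + starH f (Equiv.swap a b))) (Equiv.swap a b) =
      (2⁻¹ : ℂ) • (f + starH f (Equiv.swap a b)) := by
    rw [starH_smul, starH_swap_add_starH_swap]
  have hhs : starH ((2⁻¹ : ℂ) • q) (Equiv.swap a b) = (2⁻¹ : ℂ) • q := by
    rw [starH_smul, hqs]
  refine ⟨((2⁻¹ : ℂ) • (f + starH f (Equiv.swap a b)), (2⁻¹ : ℂ) • q),
    ⟨⟨HCset.smul_mem _ (HCset.add_mem hf hfs), hgs⟩, ⟨HCset.smul_mem _ hqC, hhs⟩, hdecomp⟩, ?_⟩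
  rintro ⟨g, h⟩ ⟨⟨-, hg⟩, ⟨-, hh⟩, hfgh⟩
  obtain ⟨rfl, rfl⟩ := eq_of_add_xH_sub_xH_mul_eq hne hg hh hgs hhs (hfgh.symm.trans hdecomp)
  rfl

/-- Decomposition, stable case: for an `s`-stable set `C`
(`s = swap a b ∈ C`, `b = a + 1`, `sCs = C`), every `f ∈ HCset C` decomposes
uniquely as `f = g + (xH a - xH b) * h` with both `g` and `h` in
`{f ∈ HCset C : f ∗ s = f}`; this is the internal direct sum decomposition
of `HCset C` as fixed part plus `(xH a - xH b)` times the fixed part. -/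
theorem stable_decomposition (n : ℕ) (a b : Fin n) (hab : (a : ℕ) + 1 = b)
    (C : Set (Equiv.Perm (Fin n)))
    (hC : ∀ τ ∈ C, Equiv.Perm.IsSwap τ)
    (hs : Equiv.swap a b ∈ C)
    (hstab : ∀ τ, τ ∈ C ↔ Equiv.swap a b * τ * Equiv.swap a b ∈ C) :
    ∀ f ∈ HCset C, ∃! p : Hr n × Hr n,
      (p.1 ∈ HCset C ∧ starH p.1 (Equiv.swap a b) = p.1) ∧
      (p.2 ∈ HCset C ∧ starH p.2 (Equiv.swap a b) = p.2) ∧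
      f = p.1 + (xH a - xH b) * p.2 :=
  stable_decomposition_general n a b hab C hs hstab
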